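/- arXiv:2102.12264 — 2 statements merged into one kernel-verified Lean document; each statement's English description precedes it below -/
import Mathlib

section
/- Let A be an n×n matrix over the extended reals EReal and let i be an index. Then there exists an integer k ≥ 1 with (A^k)_{ii} > 0 (i.e. the precedence graph of A has a circuit of positive weight containing node i) if and only if (A^*)_{ii} = +∞. -/
open scoped Classical

namespace NCP

/-- Square max-plus matrices over the extended reals. -/
abbrev MPMat (n : ℕ) := Fin n → Fin n → EReal

/-- Max-plus matrix product: `(A ⊗ B) i j = ⨆ k, A i k + B k j`. -/
noncomputable def mpMul {n : ℕ} (A B : MPMat n) : MPMat n :=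
  fun i j => ⨆ k : Fin n, A i k + B k j

/-- Max-plus identity matrix `E_⊗`. -/
noncomputable def mpId {n : ℕ} : MPMat n :=
  fun i j => if i = j then 0 else ⊥

/-- Max-plus matrix powers. -/
noncomputable def mpPow {n : ℕ} (A : MPMat n) : ℕ → MPMat n
  | 0 => mpId
  | k + 1 => mpMul A (mpPow A k)

/-- Entrywise Kleene star `(A^*) i j = ⨆ k, (A^k) i j`. -/
noncomputable def mpStar {n : ℕ} (A : MPMat n) : MPMat n :=
  fun i j => ⨆ k : ℕ, mpPow A k i j

/-- Entrywise max of two matrices, `A ⊕ B`. -/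
noncomputable def mpAdd {n : ℕ} (A B : MPMat n) : MPMat n :=
  fun i j => max (A i j) (B i j)

/-- `G(A) ∈ Γ`: all diagonal entries of all positive powers are ≤ 0. -/
def InGamma {n : ℕ} (A : MPMat n) : Prop :=
  ∀ i : Fin n, ∀ k : ℕ, 1 ≤ k → mpPow A k i i ≤ 0

/-- `λA`: the matrix with entries `λ + A i j`. -/
noncomputable def sm {n : ℕ} (lam : ℝ) (A : MPMat n) : MPMat n :=
  fun i j => (lam : EReal) + A i j

/-- Division of an extended real by a natural number (±∞ map to ±∞). -/
noncomputable def edivNat (x : EReal) (k : ℕ) : EReal :=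
  if x = ⊤ then ⊤ else if x = ⊥ then ⊥ else ((x.toReal / k : ℝ) : EReal)

/-- The maximum circuit mean of a max-plus matrix. -/
noncomputable def mcm {n : ℕ} (M : MPMat n) : EReal :=
  ⨆ k ∈ Finset.Icc 1 n, ⨆ i : Fin n, edivNat (mpPow M k i i) k

/-- Morphism from words to max-plus matrices determined by `f` on letters. -/
noncomputable def wordMat {α : Type*} {n : ℕ} (f : α → MPMat n) : List α → MPMat n
  | [] => mpId
  | z :: s => mpMul (f z) (wordMat f s)

/-- Entrywise extension of `wordMat` to languages: `μ(L) i j = ⨆ s ∈ L, μ(s) i j`. -/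
noncomputable def langMat {α : Type*} {n : ℕ} (f : α → MPMat n) (L : Language α) : MPMat n :=
  fun i j => ⨆ s ∈ L, wordMat f s i j

/-- The recursive sequence of languages `S(L₁, L₂, k)`. -/
def SL {α : Type*} (L1 L2 : Language α) : ℕ → Language α
  | 0 => 1
  | k + 1 => L1 * SL L1 L2 k * SL L1 L2 k * L2 + L2 * SL L1 L2 k * SL L1 L2 k * L1 + 1

/-! Since `(A^(a+b)) i j ≥ (A^a) i m + (A^b) m j`, a circuit through `i` of positive weight `c`
repeated `m` times gives `(A^(m k)) i i ≥ m • c`, which is unbounded. Conversely, if no circuit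
through `i` is positive then every `(A^k) i i` is at most `(A^0) i i = 0`. -/

theorem EReal.iSup_nsmul_eq_top {x : EReal} (hx : 0 < x) : ⨆ m : ℕ, m • x = ⊤ := by
  obtain ⟨r, hr, hrx⟩ := EReal.lt_iff_exists_real_btwn.mp hx
  refine (EReal.eq_top_iff_forall_lt _).mpr fun y => ?_
  obtain ⟨m, hm⟩ := exists_lt_nsmul (EReal.coe_pos.mp hr) y
  calc (y : EReal) < m • (r : EReal) := by rw [← EReal.coe_nsmul]; exact_mod_cast hm
    _ ≤ m • x := nsmul_le_nsmul_right hrx.le m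
    _ ≤ ⨆ m : ℕ, m • x := le_iSup (fun m : ℕ => m • x) m

section

variable {n : ℕ} (A : MPMat n)

theorem mpPow_zero_self (i : Fin n) : mpPow A 0 i i = 0 := by
  simp [mpPow, mpId]

theorem mpPow_le_mpStar (k : ℕ) (i j : Fin n) : mpPow A k i j ≤ mpStar A i j :=
  le_iSup (fun k => mpPow A k i j) k

theorem add_mpPow_le_mpPow_add (a b : ℕ) (i m j : Fin n) :
    mpPow A a i m + mpPow A b m j ≤ mpPow A (a + b) i j := by
  induction a generalizing i with
  | zero =>
    by_cases h : i = m
    · subst h; simp [mpPow_zero_self]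
    · simp [mpPow, mpId, h]
  | succ a ih =>
    have : Nonempty (Fin n) := ⟨i⟩
    obtain ⟨l, hl⟩ := Finite.exists_max fun l => A i l + mpPow A a l m
    have hsup : mpPow A (a + 1) i m = A i l + mpPow A a l m :=
      le_antisymm (iSup_le hl) (le_iSup (fun l => A i l + mpPow A a l m) l)
    calc mpPow A (a + 1) i m + mpPow A b m j
        ≤ A i l + mpPow A (a + b) l j := by
          rw [hsup, add_assoc]; exact add_le_add le_rfl (ih l)
      _ ≤ mpPow A (a + 1 + b) i j := by
          rw [Nat.add_right_comm]
          exact le_iSup (fun l' => A i l' + mpPow A (a + b) l' j) l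

theorem nsmul_mpPow_le_mpPow_mul (m k : ℕ) (i : Fin n) :
    m • mpPow A k i i ≤ mpPow A (m * k) i i := by
  induction m with
  | zero => simp [mpPow_zero_self]
  | succ m ih =>
    calc (m + 1) • mpPow A k i i = mpPow A k i i + m • mpPow A k i i := succ_nsmul' _ _
      _ ≤ mpPow A k i i + mpPow A (m * k) i i := add_le_add le_rfl ih
      _ ≤ mpPow A ((m + 1) * k) i i := by
          rw [Nat.succ_mul, Nat.add_comm]; exact add_mpPow_le_mpPow_add A _ _ i i i

theorem mpStar_self_le_zero {i : Fin n} (h : ∀ k, 1 ≤ k → mpPow A k i i ≤ 0) :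
    mpStar A i i ≤ 0 :=
  iSup_le fun k => k.eq_zero_or_pos.elim (fun hk => hk ▸ (mpPow_zero_self A i).le) (h k)

end

/-- there is a circuit of positive weight through node `i`
(i.e. `(A^k) i i > 0` for some `k ≥ 1`) iff `(A^*) i i = +∞`. -/
theorem stmt3 {n : ℕ} (A : MPMat n) (i : Fin n) :
    (∃ k : ℕ, 1 ≤ k ∧ 0 < mpPow A k i i) ↔ mpStar A i i = ⊤ := by
  constructor
  · rintro ⟨k, -, hpos⟩
    refine top_le_iff.mp ?_
    calc ⊤ = ⨆ m : ℕ, m • mpPow A k i i := (EReal.iSup_nsmul_eq_top hpos).symm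
      _ ≤ mpStar A i i := iSup_le fun m =>
          (nsmul_mpPow_le_mpPow_mul A m k i).trans (mpPow_le_mpStar A _ i i)
  · intro htop
    by_contra! hno
    have := mpStar_self_le_zero A hno
    simp [htop] at this

end NCP
end

section
/- Let P, I be n×n matrices with entries in ℝ ∪ {-∞} such that P_{jj} ≠ -∞ for every index j, and let S = S({p}, {i}, ⌊n/2⌋). If G(μ({p} · S^*)) ∈ Γ, then G(μ({i} ∪ S)) ∈ Γ if and only if G(μ({i} · S^*)) ∈ Γ. -/
open scoped Classical

namespace NCP

/-- The morphism on the two-letter alphabet `{p, i}` (encoded as `{true, false}`)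
sending `p` to `P` and `i` to `I`. -/
noncomputable def mu2 {n : ℕ} (P I : MPMat n) : Bool → MPMat n :=
  fun z => if z then P else I

end NCP

/-!
For a language `L`, the diagonal entries of the powers of `μ(L)` are the suprema of `μ(w)_jj`
over the words `w` of `L⁺ = L·L^*`, so `G(μ(L)) ∈ Γ` says that no word of `L⁺` labels a
circuit of positive weight. Write `A = {i}` and `B = S`.

First, no word of `B^*` labels a positive circuit: pumping such a word `w` at `j` gives words
`p·w^N ∈ {p}·B^*` of weight at least `P_jj + N·μ(w)_jj > 0`, since `P_jj ≠ -∞`. Now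
`A·B^*` is contained in `(A + B)⁺`, which gives one implication. Conversely,
`(A + B)^* ⊆ B^*·(A·B^*)^*`, and a word `u·v` with `u ∈ B^*`, `v ∈ (A·B^*)⁺` has the same
circuit weights, up to rotation, as `v·u ∈ (A·B^*)⁺`.
-/

open scoped Computability

theorem EReal.iSup_add {ι : Sort*} (g : ι → EReal) (c : EReal) :
    (⨆ i, g i) + c = ⨆ i, g i + c := by
  refine le_antisymm (EReal.add_le_of_forall_lt fun a ha b hb => ?_)
    (iSup_le fun i => add_le_add_left (le_iSup g i) c)
  obtain ⟨i, hi⟩ := lt_iSup_iff.1 ha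
  exact (add_le_add hi.le hb.le).trans (le_iSup (g · + c) i)

theorem EReal.add_iSup {ι : Sort*} (g : ι → EReal) (c : EReal) :
    c + ⨆ i, g i = ⨆ i, c + g i := by
  simp only [add_comm c, EReal.iSup_add]

theorem EReal.exists_pos_add_nsmul {x c : EReal} (hx : x ≠ ⊥) (hc : 0 < c) :
    ∃ N : ℕ, 0 < x + N • c := by
  obtain ⟨r, -, hr⟩ := EReal.lt_iff_exists_real_btwn.1 (bot_lt_iff_ne_bot.2 hx)
  obtain ⟨ε, hε0, hεc⟩ := EReal.lt_iff_exists_real_btwn.1 hc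
  have hε : 0 < ε := by exact_mod_cast hε0
  obtain ⟨N, hN⟩ := exists_nat_gt (-r / ε)
  have hpos : 0 < r + N • ε := by
    rw [_root_.nsmul_eq_mul]
    linarith [(div_lt_iff₀ hε).1 hN]
  refine ⟨N, ?_⟩
  calc (0 : EReal) < ((r + N • ε : ℝ) : EReal) := by exact_mod_cast hpos
    _ = r + N • (ε : EReal) := by rw [EReal.coe_add, EReal.coe_nsmul]
    _ ≤ x + N • c := add_le_add hr.le (nsmul_le_nsmul_right hεc.le N)

section KleeneAlgebra

variable {α : Type*} [KleeneAlgebra α] (a b : α)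

theorem kstar_add_le_kstar_mul_kstar : (a + b)∗ ≤ b∗ * (a * b∗)∗ := by
  refine kstar_le_of_mul_le_right (one_le_mul one_le_kstar one_le_kstar) ?_
  rw [add_mul]
  refine add_le ?_ ?_
  · grw [← mul_assoc, mul_kstar_le_kstar]
    exact le_mul_of_one_le_left' one_le_kstar
  · grw [← mul_assoc, mul_kstar_le_kstar]

theorem mul_kstar_mul_kstar_le_add_mul_kstar :
    a * b∗ * (a * b∗)∗ ≤ (a + b) * (a + b)∗ := by
  have ha : a ≤ a + b := le_self_add
  have hb : b∗ ≤ (a + b)∗ := kstar_mono le_add_self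
  have hab : a * b∗ ≤ (a + b)∗ := (mul_le_mul' ha hb).trans mul_kstar_le_kstar
  calc a * b∗ * (a * b∗)∗ ≤ (a + b) * (a + b)∗ * (a + b)∗∗ :=
        mul_le_mul' (mul_le_mul' ha hb) (kstar_mono hab)
    _ = (a + b) * (a + b)∗ := by rw [kstar_idem, mul_assoc, kstar_mul_kstar]

end KleeneAlgebra

namespace NCP

variable {n : ℕ}

theorem mpId_mul (A : MPMat n) : mpMul mpId A = A := by
  funext i j
  refine le_antisymm (iSup_le fun k => ?_) (le_iSup_of_le i (by simp [mpId]))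
  by_cases h : i = k
  · subst h; simp [mpId]
  · simp [mpId, h]

theorem mpMul_id (A : MPMat n) : mpMul A mpId = A := by
  funext i j
  refine le_antisymm (iSup_le fun k => ?_) (le_iSup_of_le j (by simp [mpId]))
  by_cases h : k = j
  · subst h; simp [mpId]
  · simp [mpId, h]

theorem mpMul_assoc (A B C : MPMat n) : mpMul (mpMul A B) C = mpMul A (mpMul B C) := by
  funext i j
  simp only [mpMul, EReal.iSup_add, EReal.add_iSup, add_assoc]
  exact iSup_comm

section Words

variable {α : Type*} (f : α → MPMat n)

theorem wordMat_singleton (z : α) : wordMat f [z] = f z :=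
  mpMul_id (f z)

theorem wordMat_append (u v : List α) :
    wordMat f (u ++ v) = mpMul (wordMat f u) (wordMat f v) := by
  induction u with
  | nil => exact (mpId_mul _).symm
  | cons z u ih => rw [List.cons_append, wordMat, wordMat, ih, mpMul_assoc]

theorem add_le_wordMat_append (u v : List α) (i k j : Fin n) :
    wordMat f u i k + wordMat f v k j ≤ wordMat f (u ++ v) i j := by
  rw [wordMat_append]
  exact le_iSup (fun l => wordMat f u i l + wordMat f v l j) k

theorem nsmul_le_wordMat_flatten_replicate (w : List α) (j : Fin n) (N : ℕ) :
    N • wordMat f w j j ≤ wordMat f (List.replicate N w).flatten j j := by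
  induction N with
  | zero => simp [wordMat, mpId]
  | succ N ih =>
    rw [succ_nsmul', List.replicate_succ, List.flatten_cons]
    exact (add_le_add le_rfl ih).trans (add_le_wordMat_append f _ _ j j j)

theorem langMat_one : langMat f 1 = mpId := by
  funext i j
  simp [langMat, wordMat]

theorem langMat_mul (L M : Language α) :
    langMat f (L * M) = mpMul (langMat f L) (langMat f M) := by
  funext i j
  refine le_antisymm (iSup₂_le fun w hw => ?_) (iSup_le fun k => ?_)
  · obtain ⟨u, hu, v, hv, rfl⟩ := Language.mem_mul.1 hw
    rw [wordMat_append]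
    exact iSup_mono fun k =>
      add_le_add (le_iSup₂ (f := fun s _ => wordMat f s i k) u hu)
        (le_iSup₂ (f := fun s _ => wordMat f s k j) v hv)
  · simp only [langMat, EReal.iSup_add, EReal.add_iSup]
    refine iSup₂_le fun v hv => iSup₂_le fun u hu => ?_
    exact (add_le_wordMat_append f u v i k j).trans
      (le_iSup₂ (f := fun s _ => wordMat f s i j) (u ++ v) (Language.append_mem_mul hu hv))

theorem mpPow_langMat (L : Language α) (k : ℕ) : mpPow (langMat f L) k = langMat f (L ^ k) := by
  induction k with
  | zero => exact (langMat_one f).symm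
  | succ k ih => rw [pow_succ', langMat_mul, ← ih]; rfl

end Words

variable {α : Type*} {f : α → MPMat n} {L M : Language α}

def DiagNonpos (f : α → MPMat n) (L : Language α) : Prop :=
  ∀ w ∈ L, ∀ j, wordMat f w j j ≤ 0

theorem DiagNonpos.mono (h : DiagNonpos f M) (hLM : L ≤ M) : DiagNonpos f L :=
  fun w hw => h w (hLM hw)

theorem DiagNonpos.add (hL : DiagNonpos f L) (hM : DiagNonpos f M) : DiagNonpos f (L + M) :=
  fun w hw => (Language.mem_add L M w).1 hw |>.elim (hL w) (hM w)

theorem DiagNonpos.mul_comm (h : DiagNonpos f (L * M)) : DiagNonpos f (M * L) := by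
  rintro _ ⟨v, hv, u, hu, rfl⟩ j
  rw [wordMat_append]
  refine iSup_le fun l => ?_
  rw [add_comm]
  exact (add_le_wordMat_append f u v l j l).trans (h _ (Language.append_mem_mul hu hv) l)

theorem inGamma_langMat_iff : InGamma (langMat f L) ↔ DiagNonpos f (L * L∗) := by
  simp only [InGamma, mpPow_langMat, langMat, iSup₂_le_iff, DiagNonpos]
  constructor
  · rintro h _ ⟨u, hu, v, hv, rfl⟩ j
    obtain ⟨ws, rfl, hws⟩ := Language.mem_kstar.1 hv
    refine h j (ws.length + 1) le_add_self _ ?_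
    rw [pow_succ']
    exact Language.append_mem_mul hu (Language.mem_pow.2 ⟨ws, rfl, rfl, hws⟩)
  · rintro h j (_ | k) hk w hw
    · omega
    · rw [pow_succ'] at hw
      exact h w ((mul_le_mul' le_rfl pow_le_kstar : L * L ^ k ≤ L * L∗) hw) j

theorem DiagNonpos.kstar_of_singleton_mul {x : List α}
    (hx : ∀ j, wordMat f x j j ≠ ⊥) (h : DiagNonpos f ({x} * L∗)) : DiagNonpos f L∗ := by
  intro w hw j
  by_contra! hpos
  obtain ⟨N, hN⟩ := EReal.exists_pos_add_nsmul (hx j) hpos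
  have hpow : (List.replicate N w).flatten ∈ L∗ := by
    rw [← kstar_idem L]
    exact Language.join_mem_kstar fun y hy => (List.eq_of_mem_replicate hy).symm ▸ hw
  refine hN.not_ge ((add_le_add le_rfl (nsmul_le_wordMat_flatten_replicate f w j N)).trans ?_)
  exact (add_le_wordMat_append f x _ j j j).trans (h _ (Language.append_mem_mul rfl hpow) j)

theorem inGamma_add_iff_inGamma_mul_kstar {A B : Language α} (hB : DiagNonpos f B∗) :
    InGamma (langMat f (A + B)) ↔ InGamma (langMat f (A * B∗)) := by
  rw [inGamma_langMat_iff, inGamma_langMat_iff]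
  refine ⟨fun h => h.mono (mul_kstar_mul_kstar_le_add_mul_kstar A B), fun h => ?_⟩
  have hrot : (A * B∗)∗ * (A * B∗) * B∗ = A * B∗ * (A * B∗)∗ := by
    rw [mul_assoc, mul_assoc A, kstar_mul_kstar, Language.mul_self_kstar_comm]
  have hdenest : DiagNonpos f (B∗ * (A * B∗)∗) := by
    rw [← one_add_kstar_mul (a := A * B∗), mul_add, mul_one]
    exact hB.add (h.mono hrot.le).mul_comm
  exact hdenest.mono (mul_kstar_le_kstar.trans (kstar_add_le_kstar_mul_kstar A B))

theorem stmt15_general {n : ℕ} (P I : MPMat n)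
    (hPd : ∀ j, P j j ≠ ⊥)
    (hyp : InGamma (langMat (mu2 P I)
      (({[true]} : Language Bool) *
        KStar.kstar (SL ({[true]} : Language Bool) ({[false]} : Language Bool) (n / 2))))) :
    InGamma (langMat (mu2 P I)
      (({[false]} : Language Bool) +
        SL ({[true]} : Language Bool) ({[false]} : Language Bool) (n / 2))) ↔
    InGamma (langMat (mu2 P I)
      (({[false]} : Language Bool) *
        KStar.kstar (SL ({[true]} : Language Bool) ({[false]} : Language Bool) (n / 2)))) := by
  refine inGamma_add_iff_inGamma_mul_kstar ?_
  refine ((inGamma_langMat_iff.1 hyp).mono ?_).kstar_of_singleton_mul (x := [true]) ?_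
  · exact le_mul_of_one_le_right' one_le_kstar
  · simpa [wordMat_singleton, mu2] using hPd

/-- with `S = S({p}, {i}, ⌊n/2⌋)`, if `G(μ({p}·S^*)) ∈ Γ`, then
`G(μ({i} ∪ S)) ∈ Γ ↔ G(μ({i}·S^*)) ∈ Γ`. -/
theorem stmt15 {n : ℕ} (P I : MPMat n)
    (hP : ∀ i j, P i j ≠ ⊤) (hI : ∀ i j, I i j ≠ ⊤)
    (hPd : ∀ j, P j j ≠ ⊥)
    (hyp : InGamma (langMat (mu2 P I)
      (({[true]} : Language Bool) *
        KStar.kstar (SL ({[true]} : Language Bool) ({[false]} : Language Bool) (n / 2))))) :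
    InGamma (langMat (mu2 P I)
      (({[false]} : Language Bool) +
        SL ({[true]} : Language Bool) ({[false]} : Language Bool) (n / 2))) ↔
    InGamma (langMat (mu2 P I)
      (({[false]} : Language Bool) *
        KStar.kstar (SL ({[true]} : Language Bool) ({[false]} : Language Bool) (n / 2)))) :=
  stmt15_general P I hPd hyp

end NCP
end
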